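/- arXiv:0803.1008 — 4 statements merged into one kernel-verified Lean document; each statement's English description precedes it below -/
import Mathlib

section
/- Let A be a k×k real matrix all of whose eigenvalues have negative real part. Then there exist α > 0, q ∈ [0,1), and a norm ‖·‖₀ on ℝ^k such that ‖(I + αA)v‖₀ ≤ q‖v‖₀ for all v ∈ ℝ^k. -/
open Filter
open scoped ENNReal NNReal

/-- If all (complex) eigenvalues of a real k×k matrix A have negative real part,
then there are α > 0, q ∈ [0,1) and a norm ‖·‖₀ on ℝ^k such that
‖(I + αA)v‖₀ ≤ q‖v‖₀ for all v. -/
theorem stmt_1 {k : ℕ} (A : Matrix (Fin k) (Fin k) ℝ)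
    (heig : ∀ μ ∈ spectrum ℂ (A.map (algebraMap ℝ ℂ)), μ.re < 0) :
    ∃ α > (0 : ℝ), ∃ q : ℝ, 0 ≤ q ∧ q < 1 ∧
      ∃ N : (Fin k → ℝ) → ℝ,
        (∀ v, 0 ≤ N v) ∧ (∀ v, N v = 0 → v = 0) ∧
        (∀ (c : ℝ) (v), N (c • v) = |c| * N v) ∧
        (∀ v w, N (v + w) ≤ N v + N w) ∧
        (∀ v : Fin k → ℝ, N (((1 : Matrix (Fin k) (Fin k) ℝ) + α • A).mulVec v) ≤ q * N v) := by
  classical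
  set B := A.map (algebraMap ℝ ℂ) with hBdef
  have hKc : IsCompact (spectrum ℂ B) := by
    rw [← AlgEquiv.spectrum_eq (Matrix.toEuclideanCLM (𝕜 := ℂ) (n := Fin k)) B]
    exact spectrum.isCompact _
  -- choose α
  obtain ⟨α, hα0, hαsmall⟩ :
      ∃ α : ℝ, 0 < α ∧ ∀ ν ∈ spectrum ℂ B, ‖1 + (α : ℂ) * ν‖ < 1 := by
    rcases (spectrum ℂ B).eq_empty_or_nonempty with he | hne
    · exact ⟨1, one_pos, fun ν hν => absurd (he ▸ hν) (Set.notMem_empty ν)⟩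
    · obtain ⟨ν₀, hν₀, hmax⟩ := hKc.exists_isMaxOn hne Complex.continuous_re.continuousOn
      obtain ⟨R, hR⟩ := hKc.isBounded.exists_norm_le
      have hm : ν₀.re < 0 := heig ν₀ hν₀
      have hR0 : 0 ≤ R := le_trans (norm_nonneg ν₀) (hR ν₀ hν₀)
      refine ⟨min 1 (-ν₀.re / (R ^ 2 + 1)),
        lt_min one_pos (div_pos (by linarith) (by positivity)), ?_⟩
      intro ν hν
      set α := min 1 (-ν₀.re / (R ^ 2 + 1)) with hαdef
      have hα0 : 0 < α := lt_min one_pos (div_pos (by linarith) (by positivity))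
      have h1 : ν.re ≤ ν₀.re := hmax hν
      have h2 : ‖ν‖ ≤ R := hR ν hν
      have h3 : ν.re ^ 2 + ν.im ^ 2 ≤ R ^ 2 := by
        have h4 : ν.re ^ 2 + ν.im ^ 2 = ‖ν‖ ^ 2 := by
          rw [Complex.sq_norm, Complex.normSq_apply]; ring
        nlinarith [norm_nonneg ν]
      have hq1 : α * (R ^ 2) ≤ -ν₀.re - α := by
        have h5 : α ≤ -ν₀.re / (R ^ 2 + 1) := min_le_right _ _
        have h6 : α * (R ^ 2 + 1) ≤ -ν₀.re :=
          (le_div_iff₀ (by positivity)).mp h5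
        nlinarith
      have hz : ‖1 + (α : ℂ) * ν‖ ^ 2 = (1 + α * ν.re) ^ 2 + (α * ν.im) ^ 2 := by
        rw [Complex.sq_norm, Complex.normSq_apply]
        simp [Complex.add_re, Complex.add_im, Complex.mul_re, Complex.mul_im]
        ring
      have hz2 : ‖1 + (α : ℂ) * ν‖ ^ 2 < 1 := by
        rw [hz]
        nlinarith [mul_le_mul_of_nonneg_left h1 hα0.le,
          mul_le_mul_of_nonneg_left h3 (mul_pos hα0 hα0).le,
          mul_le_mul_of_nonneg_left hq1 hα0.le, mul_pos hα0 hα0]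
      nlinarith [norm_nonneg (1 + (α : ℂ) * ν)]
  -- the matrices
  set M : Matrix (Fin k) (Fin k) ℝ := 1 + α • A with hMdef
  set Mc : Matrix (Fin k) (Fin k) ℂ := 1 + (α : ℂ) • B with hMcdef
  have hmap : M.map (algebraMap ℝ ℂ) = Mc := by
    ext i j
    simp [hMdef, hMcdef, hBdef, Matrix.map_apply, Matrix.one_apply, Matrix.add_apply,
      Matrix.smul_apply, apply_ite]
  -- every element of the spectrum of Mc has norm < 1
  have hspecMc : ∀ μ ∈ spectrum ℂ Mc, ‖μ‖ < 1 := by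
    intro μ hμ
    have hne : ((α : ℂ)) ≠ 0 := by exact_mod_cast hα0.ne'
    have hu : Mc = algebraMap ℂ _ (1 : ℂ) + (Units.mk0 (α : ℂ) hne) • B := by
      simp [hMcdef, Units.smul_def]
    rw [hu, ← spectrum.singleton_add_eq, spectrum.unit_smul_eq_smul] at hμ
    obtain ⟨x, hx, y, hy, rfl⟩ := Set.mem_add.mp hμ
    obtain ⟨ν, hν, rfl⟩ := hy
    obtain rfl : x = (1 : ℂ) := hx
    simpa [Units.smul_def, smul_eq_mul] using hαsmall ν hν
  -- the operator
  set T : EuclideanSpace ℂ (Fin k) →L[ℂ] EuclideanSpace ℂ (Fin k) :=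
    Matrix.toEuclideanCLM (𝕜 := ℂ) (n := Fin k) Mc with hTdef
  have hspecT : spectrum ℂ T = spectrum ℂ Mc :=
    AlgEquiv.spectrum_eq (Matrix.toEuclideanCLM (𝕜 := ℂ) (n := Fin k)) Mc
  have hrad : spectralRadius ℂ T < 1 := by
    rcases (spectrum ℂ T).eq_empty_or_nonempty with he | hne
    · rw [spectralRadius, he]
      simp
    · obtain ⟨μ₀, hμ₀, hmax⟩ :=
        (spectrum.isCompact T).exists_isMaxOn hne continuous_norm.continuousOn
      have hμ₀1 : ‖μ₀‖₊ < 1 := by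
        rw [← NNReal.coe_lt_coe]
        simpa using hspecMc μ₀ (hspecT ▸ hμ₀)
      calc spectralRadius ℂ T ≤ (‖μ₀‖₊ : ℝ≥0∞) := by
            rw [spectralRadius]
            exact iSup₂_le fun μ hμ => ENNReal.coe_le_coe.mpr (by
              rw [← NNReal.coe_le_coe]; simpa using hmax hμ)
        _ < 1 := by exact_mod_cast hμ₀1
  -- Gelfand: some power has norm < 1
  obtain ⟨n, hn1, hTn⟩ : ∃ n : ℕ, 1 ≤ n ∧ ‖T ^ n‖ < 1 := by
    have hG := spectrum.pow_nnnorm_pow_one_div_tendsto_nhds_spectralRadius T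
    have hev : ∀ᶠ n : ℕ in atTop, ((‖T ^ n‖₊ : ℝ≥0∞) ^ (1 / (n : ℝ))) < 1 :=
      hG.eventually_lt_const hrad
    obtain ⟨n, hlt, hge⟩ := (hev.and (eventually_ge_atTop 1)).exists
    refine ⟨n, hge, ?_⟩
    by_contra hc
    push_neg at hc
    have h1 : (1 : ℝ≥0∞) ≤ (‖T ^ n‖₊ : ℝ≥0∞) :=
      ENNReal.one_le_coe_iff.mpr (NNReal.one_le_coe.mp (by rw [coe_nnnorm]; exact hc))
    have h2 : (1 : ℝ≥0∞) ≤ (‖T ^ n‖₊ : ℝ≥0∞) ^ (1 / (n : ℝ)) := by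
      calc (1 : ℝ≥0∞) = 1 ^ (1 / (n : ℝ)) := by simp
        _ ≤ _ := ENNReal.rpow_le_rpow h1 (by positivity)
    exact absurd hlt (not_lt.mpr h2)
  have hnne : (n : ℝ) ≠ 0 := by exact_mod_cast (by omega : n ≠ 0)
  -- constants
  set c : ℝ := ‖T ^ n‖ with hcdef
  have hc0 : 0 ≤ c := norm_nonneg _
  set c' : ℝ := max c (1 / 2) with hc'def
  have hc'0 : 0 < c' := lt_of_lt_of_le (by norm_num) (le_max_right _ _)
  have hc'1 : c' < 1 := max_lt hTn (by norm_num)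
  set q : ℝ := c' ^ ((n : ℝ)⁻¹) with hqdef
  have hq0 : 0 < q := Real.rpow_pos_of_pos hc'0 _
  have hq1 : q < 1 := Real.rpow_lt_one hc'0.le hc'1 (by positivity)
  have hqn : q ^ n = c' := by
    rw [hqdef, ← Real.rpow_natCast (c' ^ ((n : ℝ)⁻¹)) n, ← Real.rpow_mul hc'0.le,
      inv_mul_cancel₀ hnne, Real.rpow_one]
  -- the Euclidean seminorm on ℝ^k
  set nE : (Fin k → ℝ) → ℝ := fun w => ‖(WithLp.equiv 2 (Fin k → ℝ)).symm w‖ with hnEdef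
  have hnE0 : ∀ w, 0 ≤ nE w := fun w => norm_nonneg _
  have hnEzero : ∀ w, nE w = 0 → w = 0 := by
    intro w hw
    have h0 : (WithLp.equiv 2 (Fin k → ℝ)).symm w = 0 := norm_eq_zero.mp hw
    funext i
    have := congrArg (fun x => WithLp.equiv 2 (Fin k → ℝ) x) h0
    simpa using congrFun this i
  have hnorm : ∀ w : Fin k → ℝ,
      ‖(WithLp.equiv 2 (Fin k → ℂ)).symm (fun i => ((w i : ℂ)))‖ = nE w := by
    intro w
    simp only [hnEdef]
    rw [EuclideanSpace.norm_eq, EuclideanSpace.norm_eq]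
    simp [Complex.norm_real]
  -- the key contraction estimate for the n-th power
  have hkey : ∀ v : Fin k → ℝ, nE ((M ^ n).mulVec v) ≤ c' * nE v := by
    intro v
    have hpow : (M ^ n).map (algebraMap ℝ ℂ) = Mc ^ n := by
      rw [← hmap]
      have := map_pow (RingHom.mapMatrix (algebraMap ℝ ℂ) :
        Matrix (Fin k) (Fin k) ℝ →+* Matrix (Fin k) (Fin k) ℂ) M n
      simpa [RingHom.mapMatrix_apply] using this
    have hTn' : Matrix.toEuclideanCLM (𝕜 := ℂ) (n := Fin k) ((M ^ n).map (algebraMap ℝ ℂ))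
        = T ^ n := by
      rw [hpow, hTdef, map_pow]
    have hmv : ((M ^ n).map (algebraMap ℝ ℂ)).mulVec (fun i => ((v i : ℂ)))
        = fun i => (((M ^ n).mulVec v i : ℝ) : ℂ) := by
      ext i
      rw [show (fun i => ((v i : ℂ))) = (algebraMap ℝ ℂ) ∘ v from rfl, ← RingHom.map_mulVec]
      simp
    have happ : (T ^ n) ((WithLp.equiv 2 (Fin k → ℂ)).symm (fun i => (v i : ℂ)))
        = (WithLp.equiv 2 (Fin k → ℂ)).symm (fun i => (((M ^ n).mulVec v i : ℝ) : ℂ)) := by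
      rw [← hTn', WithLp.equiv_symm_apply, Matrix.toEuclideanCLM_toLp, hmv]
    have h := (T ^ n).le_opNorm ((WithLp.equiv 2 (Fin k → ℂ)).symm (fun i => (v i : ℂ)))
    rw [happ, hnorm, hnorm] at h
    calc nE ((M ^ n).mulVec v) ≤ c * nE v := h
      _ ≤ c' * nE v := mul_le_mul_of_nonneg_right (le_max_left _ _) (hnE0 v)
  -- the norm N
  refine ⟨α, hα0, q, hq0.le, hq1,
    fun v => ∑ i ∈ Finset.range n, q ^ (n - 1 - i) * nE ((M ^ i).mulVec v), ?_, ?_, ?_, ?_, ?_⟩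
  · intro v
    exact Finset.sum_nonneg fun i _ => mul_nonneg (pow_nonneg hq0.le _) (hnE0 _)
  · intro v hv
    have hall := (Finset.sum_eq_zero_iff_of_nonneg
      (fun i _ => mul_nonneg (pow_nonneg hq0.le _) (hnE0 ((M ^ i).mulVec v)))).mp hv
    have h0 := hall 0 (Finset.mem_range.mpr (by omega))
    rw [pow_zero, Matrix.one_mulVec] at h0
    have : nE v = 0 := by
      rcases mul_eq_zero.mp h0 with h | h
      · exact absurd h (pow_ne_zero _ hq0.ne')
      · exact h
    exact hnEzero v this
  · intro d v
    rw [Finset.mul_sum]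
    refine Finset.sum_congr rfl fun i _ => ?_
    rw [Matrix.mulVec_smul, hnEdef]
    simp only [WithLp.equiv_symm_apply, WithLp.toLp_smul, norm_smul, Real.norm_eq_abs]
    ring
  · intro v w
    rw [← Finset.sum_add_distrib]
    refine Finset.sum_le_sum fun i _ => ?_
    rw [Matrix.mulVec_add, ← mul_add]
    refine mul_le_mul_of_nonneg_left ?_ (pow_nonneg hq0.le _)
    rw [hnEdef]
    simp only [WithLp.equiv_symm_apply, WithLp.toLp_add]
    exact norm_add_le _ _
  · intro v
    have hMv : ∀ i : ℕ, (M ^ i).mulVec (M.mulVec v) = (M ^ (i + 1)).mulVec v := by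
      intro i
      rw [Matrix.mulVec_mulVec, ← pow_succ]
    set a : ℕ → ℝ := fun i => nE ((M ^ i).mulVec v) with hadef
    have hrw : (∑ i ∈ Finset.range n, q ^ (n - 1 - i) * nE ((M ^ i).mulVec (M.mulVec v)))
        = ∑ i ∈ Finset.range n, q ^ (n - 1 - i) * a (i + 1) :=
      Finset.sum_congr rfl fun i _ => by rw [hMv i]
    set S : ℝ := ∑ j ∈ Finset.range (n + 1), q ^ (n - j) * a j with hSdef
    have eq1 : S = (∑ i ∈ Finset.range n, q ^ (n - 1 - i) * a (i + 1)) + q ^ n * a 0 := by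
      rw [hSdef, Finset.sum_range_succ', Nat.sub_zero]
      congr 1
      exact Finset.sum_congr rfl fun i _ => by congr 2; omega
    have eq2 : S = (∑ i ∈ Finset.range n, q ^ (n - i) * a i) + a n := by
      rw [hSdef, Finset.sum_range_succ, Nat.sub_self, pow_zero, one_mul]
    have eq3 : q * (∑ i ∈ Finset.range n, q ^ (n - 1 - i) * a i)
        = ∑ i ∈ Finset.range n, q ^ (n - i) * a i := by
      rw [Finset.mul_sum]
      refine Finset.sum_congr rfl fun i hi => ?_
      have hi' : i < n := Finset.mem_range.mp hi
      rw [← mul_assoc, ← pow_succ']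
      congr 2
      omega
    have han : a n ≤ q ^ n * a 0 := by
      have := hkey v
      rw [hqn]
      simpa [hadef, Matrix.one_mulVec] using this
    show (∑ i ∈ Finset.range n, q ^ (n - 1 - i) * nE ((M ^ i).mulVec (M.mulVec v)))
        ≤ q * ∑ i ∈ Finset.range n, q ^ (n - 1 - i) * nE ((M ^ i).mulVec v)
    rw [hrw]
    have : (∑ i ∈ Finset.range n, q ^ (n - 1 - i) * a (i + 1))
        = S - q ^ n * a 0 := by rw [eq1]; ring
    rw [this]
    show S - q ^ n * a 0 ≤ q * ∑ i ∈ Finset.range n, q ^ (n - 1 - i) * a i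
    rw [eq3]
    linarith [eq2, han]
end

section
/- Let g₀ : ℝ^k → ℝ^k be continuously differentiable in a neighborhood of v₀ with all eigenvalues of the Jacobian Dg₀(v₀) having negative real part. Then there exist q ∈ [0,1), α > 0, δ₀ > 0 and a norm ‖·‖₀ on ℝ^k such that ‖v₁ + α g₀(v₁) − v₂ − α g₀(v₂)‖₀ ≤ q‖v₁ − v₂‖₀ for all v₁, v₂ in the ball of radius δ₀ around v₀. -/
open Matrix Filter Metric
open scoped Pointwise Topology

attribute [local instance] Matrix.linftyOpNormedRing Matrix.linftyOpNormedAlgebra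

/-- Core contraction estimate for the adapted norm built from powers of `B`. -/
private lemma stmt2_adapted_contraction {k m : ℕ} (B : Matrix (Fin k) (Fin k) ℂ) {q : ℝ}
    (hq0 : 0 < q) (hBm : ‖B ^ m‖ ≤ q ^ m) (x : Fin k → ℂ) :
    ∑ j ∈ Finset.range m, ‖(B ^ j) *ᵥ (B *ᵥ x)‖ / q ^ j
      ≤ q * ∑ j ∈ Finset.range m, ‖(B ^ j) *ᵥ x‖ / q ^ j := by
  set f : ℕ → ℝ := fun j => ‖(B ^ j) *ᵥ x‖ / q ^ j with hf
  have h1 : ∀ j, ‖(B ^ j) *ᵥ (B *ᵥ x)‖ / q ^ j = q * f (j + 1) := by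
    intro j
    have : (B ^ j) *ᵥ (B *ᵥ x) = (B ^ (j+1)) *ᵥ x := by
      rw [Matrix.mulVec_mulVec, ← pow_succ]
    rw [this, hf]
    field_simp
    ring
  calc ∑ j ∈ Finset.range m, ‖(B ^ j) *ᵥ (B *ᵥ x)‖ / q ^ j
      = q * ∑ j ∈ Finset.range m, f (j + 1) := by
        rw [Finset.mul_sum]; exact Finset.sum_congr rfl fun j _ => h1 j
    _ ≤ q * ∑ j ∈ Finset.range m, f j := by
        refine mul_le_mul_of_nonneg_left ?_ hq0.le
        have e1 : ∑ j ∈ Finset.range m, f (j+1) + f 0 = ∑ j ∈ Finset.range m, f j + f m := by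
          rw [← Finset.sum_range_succ' f m, Finset.sum_range_succ]
        have hfm : f m ≤ f 0 := by
          have hb : ‖(B ^ m) *ᵥ x‖ ≤ q ^ m * ‖x‖ :=
            le_trans (Matrix.linfty_opNorm_mulVec _ _)
              (mul_le_mul_of_nonneg_right hBm (norm_nonneg _))
          have h0 : f 0 = ‖x‖ := by simp [hf, Matrix.one_mulVec]
          rw [h0, hf, div_le_iff₀ (pow_pos hq0 m)]
          linarith [hb]
        linarith

/-- Gelfand's formula gives a power with small norm when the spectrum lies in the unit ball. -/
private lemma stmt2_exists_pow_norm_lt_one {k : ℕ} (hk : 0 < k) (B : Matrix (Fin k) (Fin k) ℂ)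
    (h : ∀ z ∈ spectrum ℂ B, ‖z‖ < 1) : ∃ m, 1 ≤ m ∧ ‖B ^ m‖ < 1 := by
  haveI : Nonempty (Fin k) := ⟨⟨0, hk⟩⟩
  haveI : Nontrivial (Matrix (Fin k) (Fin k) ℂ) := by
    unfold Matrix; infer_instance
  haveI : CompleteSpace (Matrix (Fin k) (Fin k) ℂ) := FiniteDimensional.complete ℂ _
  have hρ : spectralRadius ℂ B < 1 := by
    have := spectrum.spectralRadius_lt_of_forall_lt B (r := 1)
      (fun z hz => by simpa [← NNReal.coe_lt_coe, coe_nnnorm] using h z hz)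
    simpa using this
  have hG := spectrum.pow_nnnorm_pow_one_div_tendsto_nhds_spectralRadius B
  have hev : ∀ᶠ n : ℕ in atTop, (‖B ^ n‖₊ : ENNReal) ^ (1 / (n : ℝ)) < 1 :=
    hG.eventually_lt_const hρ
  obtain ⟨m, hlt, hm1⟩ := (hev.and (eventually_ge_atTop 1)).exists
  refine ⟨m, hm1, ?_⟩
  by_contra hge
  push_neg at hge
  have h1 : (1 : ENNReal) ≤ (‖B ^ m‖₊ : ENNReal) := by
    rw [show ((1:ENNReal)) = ((1 : NNReal) : ENNReal) by simp, ENNReal.coe_le_coe]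
    exact_mod_cast hge
  have : (1 : ENNReal) ≤ (‖B ^ m‖₊ : ENNReal) ^ (1 / (m : ℝ)) := by
    calc (1 : ENNReal) = 1 ^ (1 / (m : ℝ)) := by simp
      _ ≤ _ := ENNReal.rpow_le_rpow h1 (by positivity)
  exact absurd hlt (not_lt.mpr this)

/-- Choice of `α`: all eigenvalues of `1 + α M` lie strictly inside the unit disc. -/
private lemma stmt2_exists_alpha {k : ℕ} (hk : 0 < k) (M : Matrix (Fin k) (Fin k) ℂ)
    (heig : ∀ μ ∈ spectrum ℂ M, μ.re < 0) :
    ∃ α : ℝ, 0 < α ∧ ∀ z ∈ spectrum ℂ (1 + (α : ℂ) • M), ‖z‖ < 1 := by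
  haveI : Nonempty (Fin k) := ⟨⟨0, hk⟩⟩
  haveI : Nontrivial (Matrix (Fin k) (Fin k) ℂ) := by unfold Matrix; infer_instance
  haveI : CompleteSpace (Matrix (Fin k) (Fin k) ℂ) := FiniteDimensional.complete ℂ _
  set f : ℂ → ℝ := fun μ => (-2 * μ.re) / (Complex.normSq μ + 1) with hfdef
  have hfc : Continuous f := by
    apply Continuous.div
    · exact continuous_const.mul Complex.continuous_re
    · exact Complex.continuous_normSq.add continuous_const
    · intro μ; exact ne_of_gt (add_pos_of_nonneg_of_pos (Complex.normSq_nonneg μ) one_pos)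
  obtain ⟨μ₀, hμ₀, hmin⟩ := (spectrum.isCompact M).exists_isMinOn (spectrum.nonempty M)
    hfc.continuousOn
  set α : ℝ := f μ₀ with hα
  have hαpos : 0 < α := by
    have := heig μ₀ hμ₀
    have h1 : 0 < Complex.normSq μ₀ + 1 :=
      add_pos_of_nonneg_of_pos (Complex.normSq_nonneg μ₀) one_pos
    exact div_pos (by linarith) h1
  refine ⟨α, hαpos, ?_⟩
  intro z hz
  have hne : (α : ℂ) ≠ 0 := by exact_mod_cast hαpos.ne'
  have hspec : spectrum ℂ ((1 : Matrix (Fin k) (Fin k) ℂ) + (α : ℂ) • M)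
      = {(1 : ℂ)} + (α : ℂ) • spectrum ℂ M := by
    have h1 : (1 : Matrix (Fin k) (Fin k) ℂ) = algebraMap ℂ _ (1 : ℂ) := by simp
    rw [h1, ← spectrum.singleton_add_eq ((α : ℂ) • M) 1]
    congr 1
    have := spectrum.unit_smul_eq_smul M (Units.mk0 (α : ℂ) hne)
    simpa [Units.smul_def] using this
  rw [hspec] at hz
  rw [Set.mem_add] at hz
  obtain ⟨x, hx, y, hy, hxy⟩ := hz
  rw [Set.mem_singleton_iff] at hx
  obtain ⟨μ, hμ, rfl⟩ := hy
  subst hx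
  subst hxy
  have hre := heig μ hμ
  set a := μ.re
  set b := μ.im
  have hs : Complex.normSq μ = a^2 + b^2 := by
    simp [Complex.normSq_apply]; ring
  have hle : α * (a^2 + b^2 + 1) ≤ -2 * a := by
    have h1 : α ≤ f μ := hmin hμ
    rw [hfdef] at h1
    simp only at h1
    rw [hs] at h1
    have h2 : (0:ℝ) < a^2 + b^2 + 1 := by positivity
    calc α * (a^2+b^2+1) ≤ ((-2*a)/(a^2+b^2+1)) * (a^2+b^2+1) :=
          mul_le_mul_of_nonneg_right h1 h2.le
      _ = -2 * a := by field_simp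
  have hzre : ((1 : ℂ) + (α:ℂ) • μ).re = 1 + α * a := by simp [Complex.smul_re, a]
  have hzim : ((1 : ℂ) + (α:ℂ) • μ).im = α * b := by simp [Complex.smul_im, b]
  have hsq : ‖(1 : ℂ) + (α:ℂ) • μ‖^2 = (1 + α*a)^2 + (α*b)^2 := by
    rw [Complex.sq_norm, Complex.normSq_apply, hzre, hzim]
    ring
  have hlt1 : ‖(1 : ℂ) + (α:ℂ) • μ‖^2 < 1 := by
    rw [hsq]
    nlinarith [mul_le_mul_of_nonneg_left hle hαpos.le, sq_nonneg α, hαpos]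
  nlinarith [norm_nonneg ((1 : ℂ) + (α:ℂ) • μ)]

/-- If g₀ is C¹ near v₀ and all complex eigenvalues of its Jacobian at v₀ have
negative real part, then there exist q ∈ [0,1), α > 0, δ₀ > 0 and a norm ‖·‖₀
for which v ↦ v + α g₀ v is a q-contraction (in ‖·‖₀) on B_{δ₀}(v₀). -/
theorem stmt_2 {k : ℕ} (g₀ : (Fin k → ℝ) → (Fin k → ℝ)) (v₀ : Fin k → ℝ)
    (hC1 : ∃ U ∈ nhds v₀, ContDiffOn ℝ 1 g₀ U)
    (heig : ∀ μ ∈ spectrum ℂ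
      ((LinearMap.toMatrix' ((fderiv ℝ g₀ v₀ : (Fin k → ℝ) →L[ℝ] (Fin k → ℝ)) :
          (Fin k → ℝ) →ₗ[ℝ] (Fin k → ℝ))).map (algebraMap ℝ ℂ)), μ.re < 0) :
    ∃ q : ℝ, 0 ≤ q ∧ q < 1 ∧ ∃ α > (0 : ℝ), ∃ δ₀ > (0 : ℝ),
      ∃ N : (Fin k → ℝ) → ℝ,
        (∀ v, 0 ≤ N v) ∧ (∀ v, N v = 0 → v = 0) ∧
        (∀ (c : ℝ) (v), N (c • v) = |c| * N v) ∧
        (∀ v w, N (v + w) ≤ N v + N w) ∧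
        (∀ v₁ ∈ Metric.closedBall v₀ δ₀, ∀ v₂ ∈ Metric.closedBall v₀ δ₀,
          N (v₁ + α • g₀ v₁ - v₂ - α • g₀ v₂) ≤ q * N (v₁ - v₂)) := by
  rcases Nat.eq_zero_or_pos k with hk | hk
  · -- trivial case k = 0
    subst hk
    haveI : Subsingleton (Fin 0 → ℝ) := ⟨fun a b => funext fun i => i.elim0⟩
    refine ⟨0, le_rfl, zero_lt_one, 1, one_pos, 1, one_pos, fun _ => 0, ?_, ?_, ?_, ?_, ?_⟩
    · intro v; exact le_rfl
    · intro v _; exact Subsingleton.elim v 0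
    · intro c v; simp
    · intro v w; simp
    · intro v₁ _ v₂ _; simp
  -- main case
  obtain ⟨U, hU, hcd⟩ := hC1
  set A : (Fin k → ℝ) →L[ℝ] (Fin k → ℝ) := fderiv ℝ g₀ v₀ with hAdef
  set A' : Matrix (Fin k) (Fin k) ℝ :=
    LinearMap.toMatrix' (A : (Fin k → ℝ) →ₗ[ℝ] (Fin k → ℝ)) with hA'def
  set M : Matrix (Fin k) (Fin k) ℂ := A'.map (algebraMap ℝ ℂ) with hMdef
  -- choose α
  obtain ⟨α, hαpos, hαspec⟩ := stmt2_exists_alpha hk M heig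
  set B : Matrix (Fin k) (Fin k) ℂ := 1 + (α : ℂ) • M with hBdef
  obtain ⟨m, hm1, hBm⟩ := stmt2_exists_pow_norm_lt_one hk B hαspec
  -- choose q₀ with ‖B^m‖ ≤ q₀^m, 1/2 ≤ q₀ < 1
  set q₀ : ℝ := max (1/2) (‖B ^ m‖ ^ (1/(m:ℝ))) with hq₀def
  have hmne : (m:ℝ) ≠ 0 := by positivity
  have hq₀pos : 0 < q₀ := lt_of_lt_of_le (by norm_num) (le_max_left _ _)
  have hq₀lt : q₀ < 1 := by
    refine max_lt (by norm_num) ?_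
    exact Real.rpow_lt_one (norm_nonneg _) hBm (by positivity)
  have hq₀m : ‖B ^ m‖ ≤ q₀ ^ m := by
    have h1 : ‖B ^ m‖ = (‖B ^ m‖ ^ (1/(m:ℝ))) ^ m := by
      rw [← Real.rpow_natCast (‖B ^ m‖ ^ (1/(m:ℝ))) m, ← Real.rpow_mul (norm_nonneg _)]
      rw [one_div_mul_cancel hmne, Real.rpow_one]
    rw [h1]
    exact pow_le_pow_left₀ (Real.rpow_nonneg (norm_nonneg _) _) (le_max_right _ _) m
  -- the complexification embedding
  set ι : (Fin k → ℝ) → (Fin k → ℂ) := fun v i => (v i : ℂ) with hιdef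
  have hιnorm : ∀ v : Fin k → ℝ, ‖ι v‖ = ‖v‖ := by
    intro v
    simp only [Pi.norm_def, Pi.nnnorm_def, hιdef]
    congr 1
    exact Finset.sup_congr rfl fun i _ => Complex.nnnorm_real (v i)
  have hιadd : ∀ v w : Fin k → ℝ, ι (v + w) = ι v + ι w := by
    intro v w; funext i; simp [hιdef]
  have hιsmul : ∀ (c : ℝ) (v : Fin k → ℝ), ι (c • v) = (c : ℂ) • ι v := by
    intro c v; funext i; simp [hιdef]
  have hMι : ∀ v : Fin k → ℝ, M *ᵥ ι v = ι (A v) := by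
    intro v
    have hAv : A' *ᵥ v = A v := by
      rw [← Matrix.toLin'_apply, hA'def, Matrix.toLin'_toMatrix']
      rfl
    funext i
    have := (RingHom.map_mulVec (algebraMap ℝ ℂ) A' v i).symm
    have hcomp : (algebraMap ℝ ℂ) ∘ v = ι v := by funext j; simp [hιdef]
    rw [hMdef, ← hcomp, this, hAv.symm]
    simp [hιdef]
  -- the adapted norm
  set N : (Fin k → ℝ) → ℝ := fun v => ∑ j ∈ Finset.range m, ‖(B ^ j) *ᵥ ι v‖ / q₀ ^ j
    with hNdef
  have hN0 : ∀ v, 0 ≤ N v := fun v =>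
    Finset.sum_nonneg fun j _ => div_nonneg (norm_nonneg _) (pow_nonneg hq₀pos.le j)
  have hNge : ∀ v, ‖v‖ ≤ N v := by
    intro v
    have h0m : 0 ∈ Finset.range m := Finset.mem_range.mpr hm1
    have := Finset.single_le_sum
      (f := fun j => ‖(B ^ j) *ᵥ ι v‖ / q₀ ^ j)
      (fun j _ => div_nonneg (norm_nonneg _) (pow_nonneg hq₀pos.le j)) h0m
    simpa [Matrix.one_mulVec, hιnorm v] using this
  -- upper comparison constant
  set C : ℝ := (∑ j ∈ Finset.range m, ‖B ^ j‖ / q₀ ^ j) + 1 with hCdef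
  have hCpos : 0 < C := by
    have : 0 ≤ ∑ j ∈ Finset.range m, ‖B ^ j‖ / q₀ ^ j :=
      Finset.sum_nonneg fun j _ => div_nonneg (norm_nonneg _) (pow_nonneg hq₀pos.le j)
    rw [hCdef]; linarith
  have hNle : ∀ v, N v ≤ C * ‖v‖ := by
    intro v
    have h1 : N v ≤ (∑ j ∈ Finset.range m, ‖B ^ j‖ / q₀ ^ j) * ‖v‖ := by
      rw [Finset.sum_mul, hNdef]
      refine Finset.sum_le_sum fun j _ => ?_
      rw [div_mul_eq_mul_div]
      refine div_le_div_of_nonneg_right ?_ (pow_pos hq₀pos j).le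
      calc ‖(B ^ j) *ᵥ ι v‖ ≤ ‖B ^ j‖ * ‖ι v‖ := Matrix.linfty_opNorm_mulVec _ _
        _ = ‖B ^ j‖ * ‖v‖ := by rw [hιnorm]
    have h2 : (∑ j ∈ Finset.range m, ‖B ^ j‖ / q₀ ^ j) * ‖v‖ ≤ C * ‖v‖ := by
      refine mul_le_mul_of_nonneg_right ?_ (norm_nonneg v)
      rw [hCdef]; linarith
    exact le_trans h1 h2
  -- choose ε and δ₀
  set ε : ℝ := (1 - q₀) / (2 * α * C) with hεdef
  have hεpos : 0 < ε := by
    apply div_pos (by linarith) (by positivity)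
  -- continuity of the derivative at v₀
  set V : Set (Fin k → ℝ) := interior U with hVdef
  have hVopen : IsOpen V := isOpen_interior
  have hv₀V : v₀ ∈ V := mem_interior_iff_mem_nhds.mpr hU
  have hcd' : ContDiffOn ℝ 1 g₀ V := hcd.mono interior_subset
  have hdiff : ∀ x ∈ V, DifferentiableAt ℝ g₀ x := fun x hx =>
    (hcd'.differentiableOn one_ne_zero).differentiableAt (hVopen.mem_nhds hx)
  have hcontAt : ContinuousAt (fderiv ℝ g₀) v₀ :=
    (hcd'.continuousOn_fderiv_of_isOpen hVopen le_rfl).continuousAt (hVopen.mem_nhds hv₀V)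
  have hev : ∀ᶠ v in 𝓝 v₀, ‖fderiv ℝ g₀ v - A‖ < ε ∧ v ∈ V := by
    have h1 : ∀ᶠ v in 𝓝 v₀, ‖fderiv ℝ g₀ v - A‖ < ε := by
      have hball : Metric.ball A ε ∈ 𝓝 (fderiv ℝ g₀ v₀) := by
        rw [← hAdef]; exact Metric.ball_mem_nhds _ hεpos
      filter_upwards [hcontAt hball] with v hv
      rw [Set.mem_preimage, mem_ball_iff_norm] at hv
      exact hv
    exact h1.and (hVopen.mem_nhds hv₀V)
  obtain ⟨δ₀, hδ₀pos, hδ₀⟩ := Metric.nhds_basis_closedBall.mem_iff.mp hev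
  -- final data
  refine ⟨(1 + q₀) / 2, by linarith, by linarith, α, hαpos, δ₀, hδ₀pos, N, hN0, ?_, ?_, ?_, ?_⟩
  · -- definiteness
    intro v hv
    have h := hNge v
    rw [hv] at h
    exact norm_eq_zero.mp (le_antisymm h (norm_nonneg v))
  · -- homogeneity
    intro c v
    rw [hNdef, Finset.mul_sum]
    refine Finset.sum_congr rfl fun j _ => ?_
    rw [hιsmul, Matrix.mulVec_smul, norm_smul, Complex.norm_real, Real.norm_eq_abs,
      mul_div_assoc]
  · -- triangle inequality
    intro v w
    rw [hNdef]
    simp only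
    rw [← Finset.sum_add_distrib]
    refine Finset.sum_le_sum fun j _ => ?_
    rw [hιadd, Matrix.mulVec_add, ← add_div]
    exact div_le_div_of_nonneg_right (norm_add_le _ _) (pow_pos hq₀pos j).le
  · -- contraction estimate
    intro v₁ hv₁ v₂ hv₂
    obtain ⟨hd1, hV1⟩ := hδ₀ hv₁
    obtain ⟨hd2, hV2⟩ := hδ₀ hv₂
    set w : Fin k → ℝ := v₁ - v₂ with hwdef
    set E : Fin k → ℝ := g₀ v₁ - g₀ v₂ - A w with hEdef
    have hEnorm : ‖E‖ ≤ ε * ‖w‖ := by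
      have := Convex.norm_image_sub_le_of_norm_fderiv_le'
        (f := g₀) (φ := (A : (Fin k → ℝ) →L[ℝ] (Fin k → ℝ))) (s := Metric.closedBall v₀ δ₀)
        (fun x hx => hdiff x (hδ₀ hx).2) (fun x hx => (hδ₀ hx).1.le)
        (convex_closedBall v₀ δ₀) hv₂ hv₁
      simpa [hEdef, hwdef] using this
    have hdecomp : v₁ + α • g₀ v₁ - v₂ - α • g₀ v₂ = (w + α • (A w)) + α • E := by
      rw [hEdef, hwdef]
      simp only [smul_sub, smul_add]
      abel
    have hBw : ι (w + α • (A w)) = B *ᵥ ι w := by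
      rw [hBdef, Matrix.add_mulVec, Matrix.one_mulVec, Matrix.smul_mulVec, hMι,
        hιadd, hιsmul]
    have hcontr : N (w + α • (A w)) ≤ q₀ * N w := by
      rw [hNdef]
      simp only
      calc ∑ j ∈ Finset.range m, ‖(B ^ j) *ᵥ ι (w + α • (A w))‖ / q₀ ^ j
          = ∑ j ∈ Finset.range m, ‖(B ^ j) *ᵥ (B *ᵥ ι w)‖ / q₀ ^ j := by
            refine Finset.sum_congr rfl fun j _ => ?_
            rw [hBw]
        _ ≤ q₀ * ∑ j ∈ Finset.range m, ‖(B ^ j) *ᵥ ι w‖ / q₀ ^ j :=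
            stmt2_adapted_contraction B hq₀pos hq₀m (ι w)
    -- put everything together
    have htri : N ((w + α • (A w)) + α • E) ≤ N (w + α • (A w)) + N (α • E) := by
      rw [hNdef]
      simp only
      rw [← Finset.sum_add_distrib]
      refine Finset.sum_le_sum fun j _ => ?_
      rw [hιadd, Matrix.mulVec_add, ← add_div]
      exact div_le_div_of_nonneg_right (norm_add_le _ _) (pow_pos hq₀pos j).le
    have hNsmul : N (α • E) = α * N E := by
      rw [hNdef, Finset.mul_sum]
      refine Finset.sum_congr rfl fun j _ => ?_
      rw [hιsmul, Matrix.mulVec_smul, norm_smul, Complex.norm_real, Real.norm_eq_abs,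
        abs_of_pos hαpos, mul_div_assoc]
    have hNE : N E ≤ C * (ε * ‖w‖) :=
      le_trans (hNle E) (mul_le_mul_of_nonneg_left hEnorm hCpos.le)
    have hwN : ‖w‖ ≤ N w := hNge w
    have hkey : α * C * ε = (1 - q₀) / 2 := by
      rw [hεdef]; field_simp
    calc N (v₁ + α • g₀ v₁ - v₂ - α • g₀ v₂)
        = N ((w + α • (A w)) + α • E) := by rw [hdecomp]
      _ ≤ N (w + α • (A w)) + N (α • E) := htri
      _ = N (w + α • (A w)) + α * N E := by rw [hNsmul]
      _ ≤ q₀ * N w + α * (C * (ε * ‖w‖)) := by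
          have := mul_le_mul_of_nonneg_left hNE hαpos.le
          linarith [hcontr]
      _ ≤ q₀ * N w + α * (C * (ε * N w)) := by
          have h1 : α * (C * (ε * ‖w‖)) ≤ α * (C * (ε * N w)) := by
            refine mul_le_mul_of_nonneg_left ?_ hαpos.le
            refine mul_le_mul_of_nonneg_left ?_ hCpos.le
            exact mul_le_mul_of_nonneg_left hwN hεpos.le
          linarith
      _ = (q₀ + (1 - q₀)/2) * N w := by
          have : α * (C * (ε * N w)) = (α * C * ε) * N w := by ring
          rw [this, hkey]; ring
      _ = (1 + q₀) / 2 * N w := by ring_nf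
end

section
/- Let g : [0,T] × ℝ^k → ℝ^k be L-Lipschitz in v uniformly in t and satisfy: for every γ̃ > 0 there exist δ̃ > 0 and a measurable set M ⊆ [0,T] with mes(M) < γ̃ such that g(t,·) is differentiable on B_{δ̃}(v₀) with ‖∂_v g(t,v) − ∂_v g(t,v₀)‖ ≤ γ̃ for t ∉ M. Then for every γ > 0 there exists δ > 0 such that ‖∫₀^T [g(τ, v₁ + u(τ)) − g(τ, v₂ + u(τ)) − g(τ, v₁) + g(τ, v₂)] dτ‖ ≤ γ‖v₁ − v₂‖ for all continuous u : [0,T] → ℝ^k with ‖u‖_∞ ≤ δ and all v₁, v₂ ∈ B_δ(v₀). -/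
open MeasureTheory

/-- Pointwise estimate: if `g` is differentiable on the ball of radius `d`
with derivative `γ`-close to the derivative at `v₀`, then the second
difference is bounded by `2γ‖v₁ - v₂‖`. -/
lemma aux_pointwise {k : ℕ} (gt : (Fin k → ℝ) → (Fin k → ℝ)) (v₀ : Fin k → ℝ)
    (d γ : ℝ)
    (hdiff : ∀ v ∈ Metric.closedBall v₀ d, DifferentiableAt ℝ gt v ∧
      ‖fderiv ℝ gt v - fderiv ℝ gt v₀‖ ≤ γ)
    (w v₁ v₂ : Fin k → ℝ) (hw : ‖w‖ ≤ d / 2)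
    (h1 : v₁ ∈ Metric.closedBall v₀ (d / 2))
    (h2 : v₂ ∈ Metric.closedBall v₀ (d / 2)) :
    ‖gt (v₁ + w) - gt (v₂ + w) - gt v₁ + gt v₂‖ ≤ (2 * γ) * ‖v₁ - v₂‖ := by
  have hdnn : 0 ≤ d := by have := norm_nonneg w; linarith
  set s := Metric.closedBall v₀ (d / 2) with hs
  have hmem : ∀ v ∈ s, v ∈ Metric.closedBall v₀ d := by
    intro v hv
    have := Metric.mem_closedBall.mp hv
    refine Metric.mem_closedBall.mpr ?_
    have : dist v v₀ ≤ d / 2 := this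
    linarith
  have hmemw : ∀ v ∈ s, v + w ∈ Metric.closedBall v₀ d := by
    intro v hv
    have h1 : dist v v₀ ≤ d / 2 := Metric.mem_closedBall.mp hv
    refine Metric.mem_closedBall.mpr ?_
    have : dist (v + w) v₀ ≤ dist (v + w) v + dist v v₀ := dist_triangle _ _ _
    have hdw : dist (v + w) v = ‖w‖ := by
      rw [dist_eq_norm]; simp
    rw [hdw] at this
    linarith
  set φ : (Fin k → ℝ) → (Fin k → ℝ) := fun v => gt (v + w) - gt v with hφ
  set D : (Fin k → ℝ) → ((Fin k → ℝ) →L[ℝ] (Fin k → ℝ)) :=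
    fun v => fderiv ℝ gt (v + w) - fderiv ℝ gt v with hD
  have hder : ∀ v ∈ s, HasFDerivWithinAt φ (D v) s v := by
    intro v hv
    have h1 : HasFDerivAt gt (fderiv ℝ gt (v + w)) (v + w) :=
      (hdiff _ (hmemw v hv)).1.hasFDerivAt
    have h2 : HasFDerivAt gt (fderiv ℝ gt v) v :=
      (hdiff _ (hmem v hv)).1.hasFDerivAt
    have h3 : HasFDerivAt (fun v => gt (v + w))
        ((fderiv ℝ gt (v + w)).comp (ContinuousLinearMap.id ℝ _)) v := by
      exact h1.comp v ((hasFDerivAt_id v).add_const w)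
    rw [ContinuousLinearMap.comp_id] at h3
    exact (h3.sub h2).hasFDerivWithinAt
  have hbound : ∀ v ∈ s, ‖D v‖ ≤ 2 * γ := by
    intro v hv
    have e1 : ‖fderiv ℝ gt (v + w) - fderiv ℝ gt v₀‖ ≤ γ := (hdiff _ (hmemw v hv)).2
    have e2 : ‖fderiv ℝ gt v - fderiv ℝ gt v₀‖ ≤ γ := (hdiff _ (hmem v hv)).2
    have : D v = (fderiv ℝ gt (v + w) - fderiv ℝ gt v₀) -
        (fderiv ℝ gt v - fderiv ℝ gt v₀) := by
      rw [hD]; abel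
    rw [this]
    calc ‖_ - _‖ ≤ ‖fderiv ℝ gt (v + w) - fderiv ℝ gt v₀‖ +
        ‖fderiv ℝ gt v - fderiv ℝ gt v₀‖ := norm_sub_le _ _
      _ ≤ 2 * γ := by linarith
  have key := (convex_closedBall v₀ (d / 2)).norm_image_sub_le_of_norm_hasFDerivWithin_le
    hder hbound h2 h1
  have : φ v₁ - φ v₂ = gt (v₁ + w) - gt (v₂ + w) - gt v₁ + gt v₂ := by
    show gt (v₁ + w) - gt v₁ - (gt (v₂ + w) - gt v₂) = _; abel
  rw [this] at key
  exact key

/-- Condition (v) (piecewise differentiability with control of the derivative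
near v₀) implies the uniform integral closeness condition (ii). -/
theorem stmt_10 {k : ℕ} (T L : ℝ) (hT : 0 < T) (hL : 0 < L) (v₀ : Fin k → ℝ)
    (g : ℝ → (Fin k → ℝ) → (Fin k → ℝ))
    (hmeas : ∀ v : Fin k → ℝ, Measurable fun t => g t v)
    (hLip : ∀ t ∈ Set.Icc (0 : ℝ) T, ∀ v₁ v₂ : Fin k → ℝ,
      ‖g t v₁ - g t v₂‖ ≤ L * ‖v₁ - v₂‖)
    (hdiff : ∀ γ > (0 : ℝ), ∃ δ > (0 : ℝ), ∃ M : Set ℝ, M ⊆ Set.Icc 0 T ∧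
      MeasurableSet M ∧ volume M < ENNReal.ofReal γ ∧
      ∀ v ∈ Metric.closedBall v₀ δ, ∀ t ∈ Set.Icc (0 : ℝ) T \ M,
        DifferentiableAt ℝ (g t) v ∧
        ‖fderiv ℝ (g t) v - fderiv ℝ (g t) v₀‖ ≤ γ) :
    ∀ γ > (0 : ℝ), ∃ δ > (0 : ℝ),
      ∀ u : ℝ → (Fin k → ℝ), ContinuousOn u (Set.Icc 0 T) →
        (∀ t ∈ Set.Icc (0 : ℝ) T, ‖u t‖ ≤ δ) →
        ∀ v₁ ∈ Metric.closedBall v₀ δ, ∀ v₂ ∈ Metric.closedBall v₀ δ,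
          ‖∫ τ in (0 : ℝ)..T,
              (g τ (v₁ + u τ) - g τ (v₂ + u τ) - g τ v₁ + g τ v₂)‖
            ≤ γ * ‖v₁ - v₂‖ := by
  intro γ hγ
  -- choose the small parameter
  set ε : ℝ := γ / (2 * (T + L)) with hε
  have hTL : 0 < T + L := by linarith
  have hεpos : 0 < ε := by positivity
  obtain ⟨d, hd, M, hMsub, hMmeas, hMvol, hM⟩ := hdiff ε hεpos
  refine ⟨d / 2, by positivity, ?_⟩
  intro u hu hubnd v₁ hv₁ v₂ hv₂
  set f : ℝ → (Fin k → ℝ) := fun τ =>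
    g τ (v₁ + u τ) - g τ (v₂ + u τ) - g τ v₁ + g τ v₂ with hf
  set C : ℝ := ‖v₁ - v₂‖ with hC
  have hCnn : 0 ≤ C := norm_nonneg _
  set b : ℝ → ℝ := fun t => 2 * ε * C + M.indicator (fun _ => 2 * L * C) t with hb
  -- pointwise bound
  have hptwise : ∀ t ∈ Set.uIoc (0 : ℝ) T, ‖f t‖ ≤ b t := by
    intro t ht
    rw [Set.uIoc_of_le hT.le] at ht
    have htIcc : t ∈ Set.Icc (0 : ℝ) T := ⟨ht.1.le, ht.2⟩
    by_cases htM : t ∈ M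
    · have h1 := hLip t htIcc (v₁ + u t) (v₂ + u t)
      have h2 := hLip t htIcc v₁ v₂
      have e1 : v₁ + u t - (v₂ + u t) = v₁ - v₂ := by abel
      rw [e1] at h1
      have : ‖f t‖ ≤ ‖g t (v₁ + u t) - g t (v₂ + u t)‖ + ‖g t v₁ - g t v₂‖ := by
        have : f t = (g t (v₁ + u t) - g t (v₂ + u t)) - (g t v₁ - g t v₂) := by
          rw [hf]; abel
        rw [this]; exact norm_sub_le _ _
      have hbt : b t = 2 * ε * C + 2 * L * C := by
        rw [hb]; simp [Set.indicator_of_mem htM]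
      rw [hbt]
      nlinarith [mul_nonneg (mul_nonneg (by norm_num : (0:ℝ) ≤ 2) hεpos.le) hCnn]
    · have hpt := aux_pointwise (g t) v₀ d ε
        (fun v hv => hM v hv t ⟨htIcc, htM⟩) (u t) v₁ v₂
        (hubnd t htIcc) hv₁ hv₂
      have hbt : b t = 2 * ε * C := by
        rw [hb]; simp [Set.indicator_of_notMem htM]
      rw [hbt]
      exact hpt
  -- integrability of the bound
  have hMfin : volume M < ⊤ := hMvol.trans_le le_top
  have hind : IntervalIntegrable (M.indicator (fun _ => 2 * L * C)) volume 0 T := by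
    rw [intervalIntegrable_iff, IntegrableOn, integrable_indicator_iff hMmeas]
    apply (integrableOn_const_iff (C := 2 * L * C)).mpr
    right
    rw [Measure.restrict_apply hMmeas]
    exact (measure_mono Set.inter_subset_left).trans_lt hMfin
  have hbint : IntervalIntegrable b volume 0 T := intervalIntegrable_const.add hind
  -- value of the integral of the bound
  have hvolM : (volume (M ∩ Set.Ioc (0 : ℝ) T)).toReal ≤ ε := by
    have h1 : volume (M ∩ Set.Ioc (0 : ℝ) T) ≤ ENNReal.ofReal ε :=
      le_trans (measure_mono Set.inter_subset_left) hMvol.le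
    calc (volume (M ∩ Set.Ioc (0 : ℝ) T)).toReal
        ≤ (ENNReal.ofReal ε).toReal := ENNReal.toReal_mono ENNReal.ofReal_ne_top h1
      _ = ε := ENNReal.toReal_ofReal hεpos.le
  have hbval : ∫ t in (0:ℝ)..T, b t = T * (2 * ε * C) +
      (volume (M ∩ Set.Ioc (0:ℝ) T)).toReal * (2 * L * C) := by
    rw [hb]
    rw [intervalIntegral.integral_add intervalIntegrable_const hind]
    congr 1
    · simp [smul_eq_mul]; ring
    · rw [intervalIntegral.integral_of_le hT.le, integral_indicator hMmeas,
        setIntegral_const, measureReal_def, Measure.restrict_apply hMmeas, smul_eq_mul]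
  have hbnn : 0 ≤ T * (2 * ε * C) + (volume (M ∩ Set.Ioc (0:ℝ) T)).toReal * (2 * L * C) := by
    have := ENNReal.toReal_nonneg (a := volume (M ∩ Set.Ioc (0:ℝ) T))
    positivity
  have key : ‖∫ τ in (0:ℝ)..T, f τ‖ ≤ |∫ t in (0:ℝ)..T, b t| :=
    intervalIntegral.norm_integral_le_abs_of_norm_le
      ((ae_restrict_iff' measurableSet_uIoc).mpr (Filter.Eventually.of_forall hptwise)) hbint
  rw [hbval, abs_of_nonneg hbnn] at key
  refine le_trans key ?_
  have hvol2 : (volume (M ∩ Set.Ioc (0:ℝ) T)).toReal * (2 * L * C) ≤ ε * (2 * L * C) :=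
    mul_le_mul_of_nonneg_right hvolM (by positivity)
  have heq : 2 * ε * (T + L) = γ := by
    rw [hε]; field_simp
  nlinarith [hvol2, hCnn, hεpos.le, hT.le, hL.le]
end

section
/- For the averaged system of the nonsmooth forced van der Pol equation ü + ε(|u| − 1)u̇ + (1 + aε)u = ελ sin t, written in amplitude-phase coordinates with u(t) = A sin(t + φ), the amplitude A of a 2π-periodic solution (to first order in ε) satisfies the resonance curve equation A²(a² + (1 − (4/(3π))|A|)²) = λ². -/
open Real intervalIntegral

lemma hasDerivAt_mul_abs (x : ℝ) : HasDerivAt (fun y : ℝ => y * |y|) (2 * |x|) x := by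
  rcases lt_trichotomy x 0 with hx | rfl | hx
  · have h0 : HasDerivAt (fun y : ℝ => -(y * y)) (-(1 * x + x * 1)) x :=
      ((hasDerivAt_id x).mul (hasDerivAt_id x)).neg
    have he : -(1 * x + x * 1) = 2 * |x| := by rw [abs_of_neg hx]; ring
    rw [he] at h0
    apply h0.congr_of_eventuallyEq
    filter_upwards [eventually_lt_nhds hx] with y hy
    simp [abs_of_neg hy]
  · simp only [abs_zero, mul_zero]
    rw [hasDerivAt_iff_tendsto_slope]
    have hs : ∀ y : ℝ, slope (fun y : ℝ => y * |y|) 0 y = |y| := by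
      intro y
      rcases eq_or_ne y 0 with rfl | hy
      · simp [slope]
      · simp [slope, hy]
    rw [show slope (fun y : ℝ => y * |y|) 0 = fun y => |y| from funext hs]
    exact (continuous_abs.tendsto' 0 0 (by simp)).mono_left nhdsWithin_le_nhds
  · have h0 : HasDerivAt (fun y : ℝ => y * y) (1 * x + x * 1) x :=
      (hasDerivAt_id x).mul (hasDerivAt_id x)
    have he : 1 * x + x * 1 = 2 * |x| := by rw [abs_of_pos hx]; ring
    rw [he] at h0
    apply h0.congr_of_eventuallyEq
    filter_upwards [eventually_gt_nhds hx] with y hy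
    simp [abs_of_pos hy]

lemma cos_nonneg_piece1 {t : ℝ} (ht : t ∈ Set.Icc 0 (π/2)) : 0 ≤ Real.cos t :=
  Real.cos_nonneg_of_mem_Icc ⟨by linarith [ht.1, pi_pos], ht.2⟩

lemma cos_nonpos_piece2 {t : ℝ} (ht : t ∈ Set.Icc (π/2) (π + π/2)) : Real.cos t ≤ 0 :=
  Real.cos_nonpos_of_pi_div_two_le_of_le ht.1 ht.2

lemma cos_nonneg_piece3 {t : ℝ} (ht : t ∈ Set.Icc (π + π/2) (2*π)) : 0 ≤ Real.cos t := by
  have h := Real.cos_nonneg_of_mem_Icc (x := t - 2*π) ⟨by linarith [ht.1], by linarith [ht.2, pi_pos]⟩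
  rwa [Real.cos_sub_two_pi] at h

lemma J1 : ∫ t in (0:ℝ)..(2*π), Real.cos t * |Real.cos t| * Real.cos t = 8/3 := by
  have hc : Continuous fun t : ℝ => Real.cos t * |Real.cos t| * Real.cos t := by fun_prop
  have key : ∀ b c : ℝ, (∫ t in b..c, Real.cos t * |Real.cos t| * Real.cos t)
      = (∫ t in b..c, Real.cos t * |Real.cos t| * Real.cos t) := fun _ _ => rfl
  have h1 : ∫ t in (0:ℝ)..(π/2), Real.cos t * |Real.cos t| * Real.cos t = 2/3 := by
    rw [intervalIntegral.integral_congr (g := fun t => Real.cos t ^ 3)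
      (fun t ht => by
        rw [Set.uIcc_of_le (by positivity)] at ht
        rw [abs_of_nonneg (cos_nonneg_piece1 ht)]; ring)]
    simp
    norm_num
  have h2 : ∫ t in (π/2)..(π + π/2), Real.cos t * |Real.cos t| * Real.cos t = 4/3 := by
    rw [intervalIntegral.integral_congr (g := fun t => -(Real.cos t ^ 3))
      (fun t ht => by
        rw [Set.uIcc_of_le (by linarith [pi_pos])] at ht
        rw [abs_of_nonpos (cos_nonpos_piece2 ht)]; ring)]
    rw [intervalIntegral.integral_neg]
    simp [Real.sin_add]
    norm_num
  have h3 : ∫ t in (π + π/2)..(2*π), Real.cos t * |Real.cos t| * Real.cos t = 2/3 := by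
    rw [intervalIntegral.integral_congr (g := fun t => Real.cos t ^ 3)
      (fun t ht => by
        rw [Set.uIcc_of_le (by linarith [pi_pos])] at ht
        rw [abs_of_nonneg (cos_nonneg_piece3 ht)]; ring)]
    simp [Real.sin_add]
    norm_num
  rw [← intervalIntegral.integral_add_adjacent_intervals (a := 0) (b := π + π/2) (c := 2*π)
      (hc.intervalIntegrable _ _) (hc.intervalIntegrable _ _),
    ← intervalIntegral.integral_add_adjacent_intervals (a := 0) (b := π/2) (c := π + π/2)
      (hc.intervalIntegrable _ _) (hc.intervalIntegrable _ _), h1, h2, h3]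
  norm_num

lemma J2 : ∫ t in (0:ℝ)..(2*π), Real.cos t * |Real.cos t| * Real.sin t = 0 := by
  have hc : Continuous fun t : ℝ => Real.cos t * |Real.cos t| * Real.sin t := by fun_prop
  have h1 : ∫ t in (0:ℝ)..(π/2), Real.cos t * |Real.cos t| * Real.sin t = 1/3 := by
    rw [intervalIntegral.integral_congr (g := fun t => Real.sin t * Real.cos t ^ 2)
      (fun t ht => by
        rw [Set.uIcc_of_le (by positivity)] at ht
        rw [abs_of_nonneg (cos_nonneg_piece1 ht)]; ring)]
    simp
  have h2 : ∫ t in (π/2)..(π + π/2), Real.cos t * |Real.cos t| * Real.sin t = 0 := by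
    rw [intervalIntegral.integral_congr (g := fun t => -(Real.sin t * Real.cos t ^ 2))
      (fun t ht => by
        rw [Set.uIcc_of_le (by linarith [pi_pos])] at ht
        rw [abs_of_nonpos (cos_nonpos_piece2 ht)]; ring)]
    rw [intervalIntegral.integral_neg]
    simp [Real.cos_add]
  have h3 : ∫ t in (π + π/2)..(2*π), Real.cos t * |Real.cos t| * Real.sin t = -(1/3) := by
    rw [intervalIntegral.integral_congr (g := fun t => Real.sin t * Real.cos t ^ 2)
      (fun t ht => by
        rw [Set.uIcc_of_le (by linarith [pi_pos])] at ht
        rw [abs_of_nonneg (cos_nonneg_piece3 ht)]; ring)]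
    simp [Real.cos_add]
    norm_num
  rw [← intervalIntegral.integral_add_adjacent_intervals (a := 0) (b := π + π/2) (c := 2*π)
      (hc.intervalIntegrable _ _) (hc.intervalIntegrable _ _),
    ← intervalIntegral.integral_add_adjacent_intervals (a := 0) (b := π/2) (c := π + π/2)
      (hc.intervalIntegrable _ _) (hc.intervalIntegrable _ _), h1, h2, h3]
  norm_num

lemma K3 (A φ c1 c2 : ℝ) (hA : 0 ≤ A) (g : ℝ → ℝ)
    (hg : (∀ t, g (t + 2*π) = g t) ∧ (∀ t, g (t + φ) = c1 * Real.cos t + c2 * Real.sin t)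
      ∧ Continuous g) :
    (∫ s in (0:ℝ)..(2*π), (A * Real.cos (s - φ)) * |A * Real.cos (s - φ)| * g s)
      = 8/3 * (A^2 * c1) := by
  obtain ⟨hgp, hge, hgc⟩ := hg
  set F : ℝ → ℝ := fun t => (A * Real.cos t) * |A * Real.cos t| * g (t + φ) with hF
  have hper : Function.Periodic F (2*π) := by
    intro t
    have h1 : t + 2*π + φ = (t + φ) + 2*π := by ring
    simp only [hF, h1, Real.cos_add_two_pi, hgp]
  have hcomp : (∫ s in (0:ℝ)..(2*π), (A * Real.cos (s - φ)) * |A * Real.cos (s - φ)| * g s)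
      = ∫ s in (0:ℝ)..(2*π), F (s - φ) := by
    apply intervalIntegral.integral_congr
    intro s _
    simp only [hF, sub_add_cancel]
  rw [hcomp, intervalIntegral.integral_comp_sub_right F φ]
  have hshift : ∫ t in (0 - φ)..(2*π - φ), F t = ∫ t in (0:ℝ)..(2*π), F t := by
    have := hper.intervalIntegral_add_eq (0 - φ) 0
    rw [show 0 - φ + 2*π = 2*π - φ by ring, show (0:ℝ) + 2*π = 2*π by ring] at this
    exact this
  rw [hshift]
  have hexp : ∀ t, F t = (A^2 * c1) * (Real.cos t * |Real.cos t| * Real.cos t)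
      + (A^2 * c2) * (Real.cos t * |Real.cos t| * Real.sin t) := by
    intro t
    have habs : |A * Real.cos t| = A * |Real.cos t| := by
      rw [abs_mul, abs_of_nonneg hA]
    simp only [hF, habs, hge]; ring
  simp only [hexp]
  rw [intervalIntegral.integral_add (by apply Continuous.intervalIntegrable; fun_prop)
      (by apply Continuous.intervalIntegrable; fun_prop),
    intervalIntegral.integral_const_mul, intervalIntegral.integral_const_mul, J1, J2]
  ring

lemma Pcos (M N : ℝ) :
    (∫ s in (0:ℝ)..(2*π),
      (M * Real.cos s + N * Real.sin s) * |M * Real.cos s + N * Real.sin s| * Real.cos s)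
      = 8/3 * (Real.sqrt (M^2 + N^2) * M) := by
  by_cases h0 : M = 0 ∧ N = 0
  · obtain ⟨rfl, rfl⟩ := h0; simp
  · set z : ℂ := ⟨M, N⟩ with hz
    have hzne : z ≠ 0 := by
      intro h
      exact h0 ⟨by simpa using congrArg Complex.re h, by simpa using congrArg Complex.im h⟩
    set A := Real.sqrt (M^2 + N^2) with hA
    have hAabs : ‖z‖ = A := by
      rw [Complex.norm_def, Complex.normSq_mk]; ring_nf; rfl
    have hApos : 0 < A := by
      rw [← hAabs]; exact (norm_pos_iff.mpr hzne)
    set φ := Complex.arg z with hφ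
    have hM : M = A * Real.cos φ := by
      rw [hφ, Complex.cos_arg hzne, hAabs]
      field_simp
      rfl
    have hN : N = A * Real.sin φ := by
      rw [hφ, Complex.sin_arg, hAabs]
      field_simp
      rfl
    have heq : ∀ s, M * Real.cos s + N * Real.sin s = A * Real.cos (s - φ) := by
      intro s
      rw [Real.cos_sub, hM, hN]; ring
    simp only [heq]
    rw [K3 A φ (Real.cos φ) (-Real.sin φ) hApos.le Real.cos
      ⟨fun t => Real.cos_add_two_pi t,
       fun t => by rw [add_comm, Real.cos_add]; ring,
       Real.continuous_cos⟩]
    rw [hM]; ring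

lemma Psin (M N : ℝ) :
    (∫ s in (0:ℝ)..(2*π),
      (M * Real.cos s + N * Real.sin s) * |M * Real.cos s + N * Real.sin s| * Real.sin s)
      = 8/3 * (Real.sqrt (M^2 + N^2) * N) := by
  by_cases h0 : M = 0 ∧ N = 0
  · obtain ⟨rfl, rfl⟩ := h0; simp
  · set z : ℂ := ⟨M, N⟩ with hz
    have hzne : z ≠ 0 := by
      intro h
      exact h0 ⟨by simpa using congrArg Complex.re h, by simpa using congrArg Complex.im h⟩
    set A := Real.sqrt (M^2 + N^2) with hA
    have hAabs : ‖z‖ = A := by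
      rw [Complex.norm_def, Complex.normSq_mk]; ring_nf; rfl
    have hApos : 0 < A := by
      rw [← hAabs]; exact (norm_pos_iff.mpr hzne)
    set φ := Complex.arg z with hφ
    have hM : M = A * Real.cos φ := by
      rw [hφ, Complex.cos_arg hzne, hAabs]
      field_simp
      rfl
    have hN : N = A * Real.sin φ := by
      rw [hφ, Complex.sin_arg, hAabs]
      field_simp
      rfl
    have heq : ∀ s, M * Real.cos s + N * Real.sin s = A * Real.cos (s - φ) := by
      intro s
      rw [Real.cos_sub, hM, hN]; ring
    simp only [heq]
    rw [K3 A φ (Real.sin φ) (Real.cos φ) hApos.le Real.sin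
      ⟨fun t => Real.sin_add_two_pi t,
       fun t => by rw [add_comm, Real.sin_add],
       Real.continuous_sin⟩]
    rw [hN]; ring

section
variable (M N : ℝ)

lemma hu (s : ℝ) : HasDerivAt (fun s => M * Real.cos s + N * Real.sin s)
    (-M * Real.sin s + N * Real.cos s) s := by
  have h := ((Real.hasDerivAt_cos s).const_mul M).add ((Real.hasDerivAt_sin s).const_mul N)
  have he : M * -Real.sin s + N * Real.cos s = -M * Real.sin s + N * Real.cos s := by ring
  rwa [he] at h

lemma huu (s : ℝ) : HasDerivAt
    (fun s => (M * Real.cos s + N * Real.sin s) * |M * Real.cos s + N * Real.sin s| / 2)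
    (|M * Real.cos s + N * Real.sin s| * (-M * Real.sin s + N * Real.cos s)) s := by
  have h := ((hasDerivAt_mul_abs (M * Real.cos s + N * Real.sin s)).comp s (hu M N s)).div_const 2
  have he : 2 * |M * Real.cos s + N * Real.sin s| * (-M * Real.sin s + N * Real.cos s) / 2
      = |M * Real.cos s + N * Real.sin s| * (-M * Real.sin s + N * Real.cos s) := by ring
  rwa [he] at h

lemma Isin : (∫ s in (0:ℝ)..(2*π),
    |M * Real.cos s + N * Real.sin s| * (-M * Real.sin s + N * Real.cos s) * Real.sin s)
    = -(4/3) * (Real.sqrt (M^2 + N^2) * M) := by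
  have hderiv : ∀ s : ℝ, HasDerivAt
      (fun s => (M * Real.cos s + N * Real.sin s) * |M * Real.cos s + N * Real.sin s| / 2
        * Real.sin s)
      (|M * Real.cos s + N * Real.sin s| * (-M * Real.sin s + N * Real.cos s) * Real.sin s
        + (M * Real.cos s + N * Real.sin s) * |M * Real.cos s + N * Real.sin s| / 2
          * Real.cos s) s :=
    fun s => (huu M N s).mul (Real.hasDerivAt_sin s)
  have key := intervalIntegral.integral_eq_sub_of_hasDerivAt (a := 0) (b := 2*π)
    (fun s _ => hderiv s) (Continuous.intervalIntegrable (by fun_prop) _ _)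
  simp only [Real.sin_two_pi, Real.sin_zero, mul_zero, sub_zero] at key
  rw [intervalIntegral.integral_add (Continuous.intervalIntegrable (by fun_prop) _ _)
    (Continuous.intervalIntegrable (by fun_prop) _ _)] at key
  have h2 : (∫ s in (0:ℝ)..(2*π),
      (M * Real.cos s + N * Real.sin s) * |M * Real.cos s + N * Real.sin s| / 2 * Real.cos s)
      = 4/3 * (Real.sqrt (M^2 + N^2) * M) := by
    have : ∀ s : ℝ, (M * Real.cos s + N * Real.sin s) * |M * Real.cos s + N * Real.sin s| / 2
        * Real.cos s = (1/2) *
        ((M * Real.cos s + N * Real.sin s) * |M * Real.cos s + N * Real.sin s| * Real.cos s) := by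
      intro s; ring
    simp only [this]
    rw [intervalIntegral.integral_const_mul, Pcos]; ring
  rw [h2] at key
  linarith [key]

lemma Icos : (∫ s in (0:ℝ)..(2*π),
    |M * Real.cos s + N * Real.sin s| * (-M * Real.sin s + N * Real.cos s) * Real.cos s)
    = 4/3 * (Real.sqrt (M^2 + N^2) * N) := by
  have hderiv : ∀ s : ℝ, HasDerivAt
      (fun s => (M * Real.cos s + N * Real.sin s) * |M * Real.cos s + N * Real.sin s| / 2
        * Real.cos s)
      (|M * Real.cos s + N * Real.sin s| * (-M * Real.sin s + N * Real.cos s) * Real.cos s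
        + (M * Real.cos s + N * Real.sin s) * |M * Real.cos s + N * Real.sin s| / 2
          * (-Real.sin s)) s :=
    fun s => (huu M N s).mul (Real.hasDerivAt_cos s)
  have key := intervalIntegral.integral_eq_sub_of_hasDerivAt (a := 0) (b := 2*π)
    (fun s _ => hderiv s) (Continuous.intervalIntegrable (by fun_prop) _ _)
  have hb : (M * Real.cos (2*π) + N * Real.sin (2*π)) * |M * Real.cos (2*π) + N * Real.sin (2*π)| / 2
        * Real.cos (2*π)
      - (M * Real.cos 0 + N * Real.sin 0) * |M * Real.cos 0 + N * Real.sin 0| / 2 * Real.cos 0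
      = 0 := by
    simp
  rw [hb] at key
  rw [intervalIntegral.integral_add (Continuous.intervalIntegrable (by fun_prop) _ _)
    (Continuous.intervalIntegrable (by fun_prop) _ _)] at key
  have h2 : (∫ s in (0:ℝ)..(2*π),
      (M * Real.cos s + N * Real.sin s) * |M * Real.cos s + N * Real.sin s| / 2 * (-Real.sin s))
      = -(4/3) * (Real.sqrt (M^2 + N^2) * N) := by
    have : ∀ s : ℝ, (M * Real.cos s + N * Real.sin s) * |M * Real.cos s + N * Real.sin s| / 2
        * (-Real.sin s) = (-(1/2)) *
        ((M * Real.cos s + N * Real.sin s) * |M * Real.cos s + N * Real.sin s| * Real.sin s) := by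
      intro s; ring
    simp only [this]
    rw [intervalIntegral.integral_const_mul, Psin]; ring
  rw [h2] at key
  linarith [key]

lemma E1 : (∫ s in (0:ℝ)..(2*π), (-M * Real.sin s + N * Real.cos s) * Real.sin s) = -(M*π) := by
  have : ∀ s : ℝ, (-M * Real.sin s + N * Real.cos s) * Real.sin s
      = (-M) * Real.sin s ^ 2 + N * (Real.sin s * Real.cos s) := by intro s; ring
  simp only [this]
  rw [intervalIntegral.integral_add (Continuous.intervalIntegrable (by fun_prop) _ _)
    (Continuous.intervalIntegrable (by fun_prop) _ _),
    intervalIntegral.integral_const_mul, intervalIntegral.integral_const_mul]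
  simp

lemma E2 : (∫ s in (0:ℝ)..(2*π), (-M * Real.sin s + N * Real.cos s) * Real.cos s) = N*π := by
  have : ∀ s : ℝ, (-M * Real.sin s + N * Real.cos s) * Real.cos s
      = (-M) * (Real.sin s * Real.cos s) + N * Real.cos s ^ 2 := by intro s; ring
  simp only [this]
  rw [intervalIntegral.integral_add (Continuous.intervalIntegrable (by fun_prop) _ _)
    (Continuous.intervalIntegrable (by fun_prop) _ _),
    intervalIntegral.integral_const_mul, intervalIntegral.integral_const_mul]
  simp

lemma E3 : (∫ s in (0:ℝ)..(2*π), (M * Real.cos s + N * Real.sin s) * Real.sin s) = N*π := by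
  have : ∀ s : ℝ, (M * Real.cos s + N * Real.sin s) * Real.sin s
      = M * (Real.sin s * Real.cos s) + N * Real.sin s ^ 2 := by intro s; ring
  simp only [this]
  rw [intervalIntegral.integral_add (Continuous.intervalIntegrable (by fun_prop) _ _)
    (Continuous.intervalIntegrable (by fun_prop) _ _),
    intervalIntegral.integral_const_mul, intervalIntegral.integral_const_mul]
  simp

lemma E4 : (∫ s in (0:ℝ)..(2*π), (M * Real.cos s + N * Real.sin s) * Real.cos s) = M*π := by
  have : ∀ s : ℝ, (M * Real.cos s + N * Real.sin s) * Real.cos s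
      = M * Real.cos s ^ 2 + N * (Real.sin s * Real.cos s) := by intro s; ring
  simp only [this]
  rw [intervalIntegral.integral_add (Continuous.intervalIntegrable (by fun_prop) _ _)
    (Continuous.intervalIntegrable (by fun_prop) _ _),
    intervalIntegral.integral_const_mul, intervalIntegral.integral_const_mul]
  simp

lemma E5 : (∫ s in (0:ℝ)..(2*π), Real.sin s ^ 2) = π := by
  simp

lemma E6 : (∫ s in (0:ℝ)..(2*π), Real.sin s * Real.cos s) = 0 := by
  simp

end

/-- Resonance curve for the nonsmooth forced van der Pol equation: if the
averaged system (in rotating coordinates M = A sin φ, N = A cos φ, with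
u(s) = M cos s + N sin s, u̇(s) = −M sin s + N cos s) vanishes at (M,N),
then the amplitude A = √(M² + N²) satisfies
A²(a² + (1 − 4|A|/(3π))²) = λ². -/
theorem stmt_11 (a lam M N : ℝ)
    (h₁ : (∫ s in (0 : ℝ)..(2 * π),
        ((|M * Real.cos s + N * Real.sin s| - 1) *
            (-M * Real.sin s + N * Real.cos s) * Real.sin s
          + a * (M * Real.cos s + N * Real.sin s) * Real.sin s
          - lam * Real.sin s ^ 2)) = 0)
    (h₂ : (∫ s in (0 : ℝ)..(2 * π),
        (-(|M * Real.cos s + N * Real.sin s| - 1) *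
            (-M * Real.sin s + N * Real.cos s) * Real.cos s
          - a * (M * Real.cos s + N * Real.sin s) * Real.cos s
          + lam * Real.sin s * Real.cos s)) = 0) :
    (Real.sqrt (M ^ 2 + N ^ 2)) ^ 2 *
        (a ^ 2 + (1 - 4 * |Real.sqrt (M ^ 2 + N ^ 2)| / (3 * π)) ^ 2)
      = lam ^ 2 := by
  set A := Real.sqrt (M ^ 2 + N ^ 2) with hA
  have hA2 : A ^ 2 = M ^ 2 + N ^ 2 := Real.sq_sqrt (by positivity)
  have h₁' : (∫ s in (0:ℝ)..(2*π),
      (|M * Real.cos s + N * Real.sin s| * (-M * Real.sin s + N * Real.cos s) * Real.sin s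
        + (-1) * ((-M * Real.sin s + N * Real.cos s) * Real.sin s)
        + a * ((M * Real.cos s + N * Real.sin s) * Real.sin s)
        + (-lam) * Real.sin s ^ 2)) = 0 := by
    rw [intervalIntegral.integral_congr
      (g := fun s => (|M * Real.cos s + N * Real.sin s| - 1) *
            (-M * Real.sin s + N * Real.cos s) * Real.sin s
          + a * (M * Real.cos s + N * Real.sin s) * Real.sin s
          - lam * Real.sin s ^ 2) (fun s _ => by ring)]
    exact h₁
  have h₂' : (∫ s in (0:ℝ)..(2*π),
      ((-1) * (|M * Real.cos s + N * Real.sin s| * (-M * Real.sin s + N * Real.cos s) * Real.cos s)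
        + ((-M * Real.sin s + N * Real.cos s) * Real.cos s)
        + (-a) * ((M * Real.cos s + N * Real.sin s) * Real.cos s)
        + lam * (Real.sin s * Real.cos s))) = 0 := by
    rw [intervalIntegral.integral_congr
      (g := fun s => -(|M * Real.cos s + N * Real.sin s| - 1) *
            (-M * Real.sin s + N * Real.cos s) * Real.cos s
          - a * (M * Real.cos s + N * Real.sin s) * Real.cos s
          + lam * Real.sin s * Real.cos s) (fun s _ => by ring)]
    exact h₂
  rw [intervalIntegral.integral_add (Continuous.intervalIntegrable (by fun_prop) _ _)
      (Continuous.intervalIntegrable (by fun_prop) _ _),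
    intervalIntegral.integral_add (Continuous.intervalIntegrable (by fun_prop) _ _)
      (Continuous.intervalIntegrable (by fun_prop) _ _),
    intervalIntegral.integral_add (Continuous.intervalIntegrable (by fun_prop) _ _)
      (Continuous.intervalIntegrable (by fun_prop) _ _),
    intervalIntegral.integral_const_mul, intervalIntegral.integral_const_mul,
    intervalIntegral.integral_const_mul, Isin, E1, E3, E5] at h₁'
  rw [intervalIntegral.integral_add (Continuous.intervalIntegrable (by fun_prop) _ _)
      (Continuous.intervalIntegrable (by fun_prop) _ _),
    intervalIntegral.integral_add (Continuous.intervalIntegrable (by fun_prop) _ _)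
      (Continuous.intervalIntegrable (by fun_prop) _ _),
    intervalIntegral.integral_add (Continuous.intervalIntegrable (by fun_prop) _ _)
      (Continuous.intervalIntegrable (by fun_prop) _ _),
    intervalIntegral.integral_const_mul, intervalIntegral.integral_const_mul,
    intervalIntegral.integral_const_mul, Icos, E2, E4, E6] at h₂'
  -- h₁' : -(4/3)*(A*M) + (-1)*(-(M*π)) + a*(N*π) + (-lam)*π = 0
  -- h₂' : (-1)*(4/3*(A*N)) + N*π + (-a)*(M*π) + lam*0 = 0
  have key1 : lam * (3*π) = M*(3*π) + a*N*(3*π) - 4*A*M := by linarith [h₁']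
  have key2 : N*(3*π) - 4*A*N = a*M*(3*π) := by linarith [h₂']
  have habs : |A| = A := abs_of_nonneg (Real.sqrt_nonneg _)
  rw [habs]
  have h3 : (3*π : ℝ) ≠ 0 := by positivity
  have main : A^2 * ((3*π)^2 * a^2 + (3*π - 4*A)^2) = lam^2 * (3*π)^2 := by
    linear_combination ((3*π)^2 * a^2 + (3*π - 4*A)^2) * hA2
      - (lam*(3*π) + M*(3*π - 4*A) + a*N*(3*π)) * key1
      + (N*(3*π - 4*A) - a*M*(3*π)) * key2
  field_simp
  linear_combination main
end
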